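/- For every natural number m ≥ 1 and real numbers 0 < q < q' < 1, one has [m+1]_q/[m]_q > [m+1]_{q'}/[m]_{q'}, where [x]_q = (q^{-x} - q^x)/(q^{-1} - q). -/

import Mathlib

noncomputable def qnum (q : ℝ) (n : ℕ) : ℝ := (q⁻¹ ^ n - q ^ n) / (q⁻¹ - q)

open Finset in
private lemma sum_key (m : ℕ) (hm : 1 ≤ m) (a b : ℝ) (ha : 0 < a) (hab : a < b)
    (hb : b < 1) :
    ∑ i ∈ range (2*m+1), b ^ i * a ^ (2*m - i) < ∑ i ∈ range (2*m+1), (a*b) ^ i := by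
  have ha1 : a < 1 := hab.trans hb
  have hb0 : 0 < b := ha.trans hab
  set g : ℕ → ℝ := fun i => (a*b)^i - b^i * a^(2*m-i) with hg
  have hterm : ∀ i ∈ range (2*m+1),
      (a^i - a^(2*m-i)) * (b^i - b^(2*m-i)) = g i + g (2*m - i) := by
    intro i hi
    have hi' : i ≤ 2*m := by simpa [Nat.lt_succ_iff] using hi
    simp only [hg, Nat.sub_sub_self hi']
    ring
  have hsum : ∑ i ∈ range (2*m+1), (a^i - a^(2*m-i)) * (b^i - b^(2*m-i))
      = 2 * ∑ i ∈ range (2*m+1), g i := by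
    rw [Finset.sum_congr rfl hterm, Finset.sum_add_distrib]
    have hrefl : ∑ i ∈ range (2*m+1), g (2*m - i) = ∑ i ∈ range (2*m+1), g i := by
      have := Finset.sum_range_reflect g (2*m+1)
      simpa using this
    rw [hrefl]; ring
  have hpos : 0 < ∑ i ∈ range (2*m+1), (a^i - a^(2*m-i)) * (b^i - b^(2*m-i)) := by
    apply Finset.sum_pos'
    · intro i _
      rcases le_total i (2*m - i) with h | h
      · have h1 : a ^ (2*m-i) ≤ a ^ i := pow_le_pow_of_le_one ha.le ha1.le h
        have h2 : b ^ (2*m-i) ≤ b ^ i := pow_le_pow_of_le_one hb0.le hb.le h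
        exact mul_nonneg (by linarith) (by linarith)
      · have h1 : a ^ i ≤ a ^ (2*m-i) := pow_le_pow_of_le_one ha.le ha1.le h
        have h2 : b ^ i ≤ b ^ (2*m-i) := pow_le_pow_of_le_one hb0.le hb.le h
        nlinarith
    · refine ⟨0, by simp, ?_⟩
      have hne : 2*m ≠ 0 := by omega
      have h1 : a ^ (2*m) < 1 := pow_lt_one₀ ha.le ha1 hne
      have h2 : b ^ (2*m) < 1 := pow_lt_one₀ hb0.le hb hne
      simp only [pow_zero, Nat.sub_zero]
      nlinarith
  have hsub : ∑ i ∈ range (2*m+1), g i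
      = (∑ i ∈ range (2*m+1), (a*b)^i) - ∑ i ∈ range (2*m+1), b ^ i * a ^ (2*m-i) := by
    simp [hg, Finset.sum_sub_distrib]
  have : 0 < ∑ i ∈ range (2*m+1), g i := by linarith [hsum ▸ hpos]
  linarith [hsub ▸ this]

open Finset in
private lemma core_ineq (m : ℕ) (hm : 1 ≤ m) (a b : ℝ) (ha : 0 < a) (hab : a < b)
    (hb : b < 1) :
    (b⁻¹ ^ (m+1) - b ^ (m+1)) * (a⁻¹ ^ m - a ^ m)
      < (a⁻¹ ^ (m+1) - a ^ (m+1)) * (b⁻¹ ^ m - b ^ m) := by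
  have ha1 : a < 1 := hab.trans hb
  have hb0 : 0 < b := ha.trans hab
  set S1 : ℝ := ∑ i ∈ range (2*m+1), (a*b) ^ i with hS1
  set S2 : ℝ := ∑ i ∈ range (2*m+1), b ^ i * a ^ (2*m - i) with hS2
  have key : S2 < S1 := sum_key m hm a b ha hab hb
  have hg1 : (1 - a*b) * S1 = 1 - (a*b)^(2*m+1) := by
    have h := geom_sum_mul (a*b) (2*m+1)
    rw [hS1]; linear_combination -h
  have hg2 : (b - a) * S2 = b^(2*m+1) - a^(2*m+1) := by
    have h := geom_sum₂_mul b a (2*m+1)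
    simp only [Nat.add_sub_cancel] at h
    rw [hS2]; linear_combination h
  have h1 : (0:ℝ) < b - a := by linarith
  have h2 : (0:ℝ) < 1 - a*b := by nlinarith
  have hD : 0 < (b - a) * (1 - (a*b)^(2*m+1)) - (1 - a*b) * (b^(2*m+1) - a^(2*m+1)) := by
    rw [← hg1, ← hg2]
    have hE : (b-a)*((1-a*b)*S1) - (1-a*b)*((b-a)*S2) = ((b-a)*(1-a*b))*(S1-S2) := by ring
    rw [hE]
    exact mul_pos (mul_pos h1 h2) (by linarith)
  have hiden : (a⁻¹^(m+1) - a^(m+1)) * (b⁻¹^m - b^m) - (b⁻¹^(m+1) - b^(m+1)) * (a⁻¹^m - a^m)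
      = ((b - a) * (1 - (a*b)^(2*m+1)) - (1 - a*b) * (b^(2*m+1) - a^(2*m+1)))
        / (a^(m+1) * b^(m+1)) := by
    simp only [inv_pow]
    field_simp
    ring
  have hq : 0 < ((b - a) * (1 - (a*b)^(2*m+1)) - (1 - a*b) * (b^(2*m+1) - a^(2*m+1)))
      / (a^(m+1) * b^(m+1)) :=
    div_pos hD (by positivity)
  linarith [hiden ▸ hq]

theorem stmt_0 (m : ℕ) (hm : 1 ≤ m) (q q' : ℝ) (hq : 0 < q) (hqq' : q < q') (hq' : q' < 1) :
    qnum q (m + 1) / qnum q m > qnum q' (m + 1) / qnum q' m := by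
  have hq1 : q < 1 := hqq'.trans hq'
  have hq'0 : 0 < q' := hq.trans hqq'
  have hpos : ∀ r : ℝ, 0 < r → r < 1 → ∀ n : ℕ, 1 ≤ n → 0 < qnum r n := by
    intro r hr hr1 n hn
    have h1 : r < r⁻¹ := by
      rw [lt_inv_comm₀ hr (by positivity)]
      · exact lt_of_lt_of_le hr1 (by rw [le_inv_comm₀ one_pos hr]; simpa using hr1.le)
    have h1' : r < r⁻¹ := h1
    apply div_pos
    · have := pow_lt_pow_left₀ h1 hr.le (by omega : n ≠ 0)
      linarith
    · linarith
  have hd : 0 < q⁻¹ - q := by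
    have : 1 < q⁻¹ := (one_lt_inv_iff₀).2 ⟨hq, hq1⟩
    linarith
  have hd' : 0 < q'⁻¹ - q' := by
    have : 1 < q'⁻¹ := (one_lt_inv_iff₀).2 ⟨hq'0, hq'⟩
    linarith
  rw [gt_iff_lt, div_lt_div_iff₀ (hpos q' hq'0 hq' m hm) (hpos q hq hq1 m hm)]
  unfold qnum
  rw [div_mul_div_comm, div_mul_div_comm, mul_comm (q'⁻¹ - q') (q⁻¹ - q),
    div_lt_div_iff₀ (by positivity) (by positivity)]
  have := core_ineq m hm q q' hq hqq' hq'
  nlinarith [mul_pos hd hd']
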